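/- (Theorem 6, part i) Fix c ∈ ℝ and s ≥ 0. Then the expected number of features per sample in the covariate-dependent MVP-IBP model with covariate effect mean c = x_i^T γ and variance s = x_i^T Ψ x_i satisfies lim_{p→∞} p · Φ((μ_p + c)/√(2 log p + s)) = α · exp(c + (s − 1)/2) = α g_i, where g_i = exp{x_i^T γ + ½(x_i^T Ψ x_i − 1)}. -/

import Mathlib

open MeasureTheory Real Filter

/-- The standard normal density `φ(x) = (2π)^{-1/2} exp(-x²/2)`. -/
noncomputable def stdNormalPDF (x : ℝ) : ℝ :=
  (Real.sqrt (2 * Real.pi))⁻¹ * Real.exp (-x ^ 2 / 2)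

/-- The standard normal CDF `Φ(x) = ∫_{-∞}^x φ(t) dt`. -/
noncomputable def stdNormalCDF (x : ℝ) : ℝ :=
  ∫ t in Set.Iio x, stdNormalPDF t

/-- `τ_p = √(2 log p)`. -/
noncomputable def tauP (p : ℕ) : ℝ := Real.sqrt (2 * Real.log p)

/-- The density of `N(μ_p, τ_p²)` at `x`, namely `τ_p⁻¹ φ((x - μ_p)/τ_p)`. -/
noncomputable def mvpDens (μ : ℕ → ℝ) (p : ℕ) (x : ℝ) : ℝ :=
  (tauP p)⁻¹ * stdNormalPDF ((x - μ p) / tauP p)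

/-!
Put `A_p = μ_p / √(1 + τ_p²)` and `B_p = (μ_p + c) / √(2 log p + s)`, so that `Φ(A_p) = α/(α+p)`
and `p Φ(A_p) → α`. Mills' ratio `Φ(x) ~ φ(x)/(-x)` as `x → -∞` gives `log Φ(x) ~ -x²/2`, hence
`A_p ~ -√(2 log p)` and `μ_p ~ -2 log p`. Then `B_p ~ -√(2 log p)` as well,
`A_p² - B_p² → s - 1 + 2c`, and Mills' ratio once more gives
`Φ(B_p)/Φ(A_p) ~ (A_p/B_p) exp((A_p² - B_p²)/2) → exp(c + (s - 1)/2)`.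
-/

open Set Asymptotics Topology

lemma stdNormalPDF_pos (x : ℝ) : 0 < stdNormalPDF x := by
  unfold stdNormalPDF; positivity

lemma integrable_stdNormalPDF : Integrable stdNormalPDF := by
  refine ((integrable_exp_neg_mul_sq (b := 2⁻¹) (by norm_num)).const_mul
    (√(2 * π))⁻¹).congr (.of_forall fun x => ?_)
  simp only [stdNormalPDF]; ring_nf

lemma hasDerivAt_stdNormalPDF (x : ℝ) : HasDerivAt stdNormalPDF (-x * stdNormalPDF x) x := by
  have h : HasDerivAt (fun x : ℝ => -x ^ 2 / 2) (-x) x :=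
    ((hasDerivAt_pow 2 x).neg.div_const 2).congr_deriv (by push_cast; ring)
  have h' : HasDerivAt stdNormalPDF ((√(2 * π))⁻¹ * (exp (-x ^ 2 / 2) * -x)) x :=
    (h.exp).const_mul _
  convert h' using 1
  simp only [stdNormalPDF]; ring

lemma tendsto_sq_atBot : Tendsto (fun x : ℝ => x ^ 2) atBot atTop :=
  ((tendsto_pow_atTop two_ne_zero).comp tendsto_neg_atBot_atTop).congr fun x => by simp

lemma tendsto_stdNormalPDF_atBot : Tendsto stdNormalPDF atBot (𝓝 0) := by
  have h : Tendsto (fun x : ℝ => -x ^ 2 / 2) atBot atBot :=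
    (tendsto_neg_atTop_atBot.comp tendsto_sq_atBot).atBot_div_const two_pos
  have := (tendsto_exp_atBot.comp h).const_mul (√(2 * π))⁻¹
  rwa [mul_zero] at this

lemma stdNormalPDF_div_stdNormalPDF (a b : ℝ) :
    stdNormalPDF b / stdNormalPDF a = exp ((a ^ 2 - b ^ 2) / 2) := by
  unfold stdNormalPDF
  rw [mul_div_mul_left _ _ (by positivity), ← exp_sub]
  ring_nf

lemma monotone_stdNormalCDF : Monotone stdNormalCDF := fun _ _ hxy =>
  setIntegral_mono_set integrable_stdNormalPDF.integrableOn
    (.of_forall fun t => (stdNormalPDF_pos t).le) (Iio_subset_Iio hxy).eventuallyLE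

section Comparison

variable {G g : ℝ → ℝ} {x : ℝ}

lemma le_stdNormalCDF_of_hasDerivAt (hG : ∀ t ∈ Iic x, HasDerivAt G (g t) t)
    (hg : IntegrableOn g (Iic x)) (hG0 : Tendsto G atBot (𝓝 0))
    (hgφ : ∀ t ∈ Iic x, g t ≤ stdNormalPDF t) : G x ≤ stdNormalCDF x := by
  rw [stdNormalCDF, ← integral_Iic_eq_integral_Iio, ← sub_zero (G x),
    ← integral_Iic_of_hasDerivAt_of_tendsto' hG hg hG0]
  exact setIntegral_mono_on hg integrable_stdNormalPDF.integrableOn measurableSet_Iic hgφ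

lemma stdNormalCDF_le_of_hasDerivAt (hG : ∀ t ∈ Iic x, HasDerivAt G (g t) t)
    (hg : IntegrableOn g (Iic x)) (hG0 : Tendsto G atBot (𝓝 0))
    (hφg : ∀ t ∈ Iic x, stdNormalPDF t ≤ g t) : stdNormalCDF x ≤ G x := by
  rw [stdNormalCDF, ← integral_Iic_eq_integral_Iio, ← sub_zero (G x),
    ← integral_Iic_of_hasDerivAt_of_tendsto' hG hg hG0]
  exact setIntegral_mono_on integrable_stdNormalPDF.integrableOn hg measurableSet_Iic hφg

end Comparison

lemma integrableOn_stdNormalPDF_mul {h : ℝ → ℝ} {s : Set ℝ} {C : ℝ} (hs : MeasurableSet s)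
    (hh : ContinuousOn h s) (hC : ∀ t ∈ s, |h t| ≤ C) :
    IntegrableOn (fun t => stdNormalPDF t * h t) s :=
  integrable_stdNormalPDF.integrableOn.mul_bdd (hh.aestronglyMeasurable hs)
    ((ae_restrict_iff' hs).2 (.of_forall hC))

lemma neg_mul_stdNormalPDF_div_le_stdNormalCDF (x : ℝ) :
    -x * stdNormalPDF x / (x ^ 2 + 1) ≤ stdNormalCDF x := by
  have hbound : ∀ t : ℝ, |1 - 2 / (t ^ 2 + 1) ^ 2| ≤ 1 := fun t => by
    have h0 : 0 ≤ 2 / (t ^ 2 + 1) ^ 2 := by positivity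
    have h2 : 2 / (t ^ 2 + 1) ^ 2 ≤ 2 :=
      div_le_self zero_le_two (one_le_pow₀ (by nlinarith [sq_nonneg t]))
    rw [abs_le]; constructor <;> linarith
  refine le_stdNormalCDF_of_hasDerivAt (G := fun t => -t * stdNormalPDF t / (t ^ 2 + 1))
    (g := fun t => stdNormalPDF t * (1 - 2 / (t ^ 2 + 1) ^ 2)) (fun t _ => ?_)
    (integrableOn_stdNormalPDF_mul measurableSet_Iic
      (Continuous.continuousOn (by fun_prop (disch := intro t; positivity))) fun t _ => hbound t)
    ?_ (fun t _ => ?_)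
  · refine (((hasDerivAt_neg t).fun_mul (hasDerivAt_stdNormalPDF t)).fun_div
      ((hasDerivAt_pow 2 t).add_const 1) (by positivity)).congr_deriv ?_
    field_simp
    ring
  · refine squeeze_zero_norm (fun t => ?_) tendsto_stdNormalPDF_atBot
    rw [norm_div, norm_mul, Real.norm_of_nonneg (stdNormalPDF_pos t).le, norm_neg,
      Real.norm_of_nonneg (by positivity : (0 : ℝ) ≤ t ^ 2 + 1)]
    rw [div_le_iff₀ (by positivity), Real.norm_eq_abs]
    have ht : |t| ≤ t ^ 2 + 1 := by nlinarith [sq_abs t, sq_nonneg (|t| - 1)]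
    exact mul_le_mul_of_nonneg_right ht (stdNormalPDF_pos t).le |>.trans_eq (mul_comm _ _)
  · have := stdNormalPDF_pos t
    have : 0 ≤ 2 / (t ^ 2 + 1) ^ 2 := by positivity
    nlinarith

lemma stdNormalCDF_le_stdNormalPDF_div_neg {x : ℝ} (hx : x < 0) :
    stdNormalCDF x ≤ stdNormalPDF x / -x := by
  refine stdNormalCDF_le_of_hasDerivAt (G := fun t => stdNormalPDF t / -t)
    (g := fun t => stdNormalPDF t * (1 + (t ^ 2)⁻¹)) (fun t ht => ?_)
    (integrableOn_stdNormalPDF_mul (C := 1 + (x ^ 2)⁻¹) measurableSet_Iic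
      (continuousOn_const.add ((continuous_pow 2).continuousOn.inv₀
        fun t ht => pow_ne_zero 2 (lt_of_le_of_lt ht hx).ne)) fun t ht => ?_)
    ?_ (fun t _ => ?_)
  · have ht0 : t ≠ 0 := (lt_of_le_of_lt ht hx).ne
    refine ((hasDerivAt_stdNormalPDF t).div (hasDerivAt_neg t) (neg_ne_zero.2 ht0)).congr_deriv ?_
    field_simp
    ring
  · have hsq : x ^ 2 ≤ t ^ 2 := by nlinarith [mem_Iic.1 ht]
    have hx2 : 0 < x ^ 2 := by nlinarith
    rw [abs_of_pos (by positivity)]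
    gcongr
  · refine squeeze_zero_norm' ?_ tendsto_stdNormalPDF_atBot
    filter_upwards [eventually_le_atBot (-1)] with t ht
    rw [norm_div, Real.norm_of_nonneg (stdNormalPDF_pos t).le, norm_neg, Real.norm_eq_abs,
      abs_of_neg (by linarith)]
    exact div_le_self (stdNormalPDF_pos t).le (by linarith)
  · have := stdNormalPDF_pos t
    have : 0 ≤ (t ^ 2)⁻¹ := by positivity
    nlinarith

lemma stdNormalCDF_pos (x : ℝ) : 0 < stdNormalCDF x := by
  set y := min x (-1)
  have hy : y < 0 := (min_le_right _ _).trans_lt (by norm_num)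
  have : 0 < -y * stdNormalPDF y / (y ^ 2 + 1) := by
    have := stdNormalPDF_pos y
    have : 0 < -y := by linarith
    positivity
  exact this.trans_le ((neg_mul_stdNormalPDF_div_le_stdNormalCDF y).trans
    (monotone_stdNormalCDF (min_le_left _ _)))

lemma isEquivalent_stdNormalCDF_atBot :
    stdNormalCDF ~[atBot] fun x => stdNormalPDF x / -x := by
  refine isEquivalent_of_tendsto_one ?_
  have hlow : Tendsto (fun x : ℝ => x ^ 2 / (x ^ 2 + 1)) atBot (𝓝 1) := by
    have := (tendsto_inv_atTop_zero.comp
      (tendsto_atTop_add_const_right _ 1 tendsto_sq_atBot)).const_sub 1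
    rw [sub_zero] at this
    refine this.congr fun x => ?_
    have : x ^ 2 + 1 ≠ 0 := by positivity
    simp only [Function.comp_apply]
    rw [eq_div_iff this, sub_mul, inv_mul_cancel₀ this]
    ring
  refine tendsto_of_tendsto_of_tendsto_of_le_of_le' hlow tendsto_const_nhds ?_ ?_
  all_goals filter_upwards [eventually_lt_atBot 0] with x hx
  all_goals have hφ := stdNormalPDF_pos x
  all_goals have hx' : 0 < -x := neg_pos.2 hx
  · rw [Pi.div_apply, le_div_iff₀ (by positivity)]
    refine (le_of_eq ?_).trans (neg_mul_stdNormalPDF_div_le_stdNormalCDF x)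
    field_simp
  · rw [Pi.div_apply, div_le_one (by positivity)]
    exact stdNormalCDF_le_stdNormalPDF_div_neg hx

lemma tendsto_atBot_of_tendsto_stdNormalCDF {ι : Type*} {l : Filter ι} {a : ι → ℝ}
    (ha : Tendsto (fun i => stdNormalCDF (a i)) l (𝓝 0)) : Tendsto a l atBot :=
  tendsto_atBot.2 fun M => (ha.eventually (gt_mem_nhds (stdNormalCDF_pos M))).mono
    fun _ hi => (monotone_stdNormalCDF.reflect_lt hi).le

lemma log_stdNormalPDF (x : ℝ) : log (stdNormalPDF x) = -x ^ 2 / 2 - log √(2 * π) := by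
  rw [stdNormalPDF, log_mul (by positivity) (exp_pos _).ne', log_inv, log_exp]
  ring

lemma isEquivalent_log_stdNormalCDF_atBot :
    (fun x => log (stdNormalCDF x)) ~[atBot] fun x => -x ^ 2 / 2 := by
  have hnorm : Tendsto (fun x : ℝ => ‖-x ^ 2 / 2‖) atBot atTop := by
    refine (tendsto_sq_atBot.atTop_div_const two_pos).congr fun x => ?_
    rw [norm_div, norm_neg, Real.norm_of_nonneg (sq_nonneg x), Real.norm_two]
  have hmills : Tendsto (fun x => log (stdNormalCDF x / (stdNormalPDF x / -x))) atBot (𝓝 0) := by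
    have hne : ∀ᶠ x : ℝ in atBot, stdNormalPDF x / -x ≠ 0 :=
      (eventually_lt_atBot 0).mono fun x hx => (div_pos (stdNormalPDF_pos x) (neg_pos.2 hx)).ne'
    have := (continuousAt_log one_ne_zero).tendsto.comp
      ((isEquivalent_iff_tendsto_one hne).1 isEquivalent_stdNormalCDF_atBot)
    rwa [log_one] at this
  have hbdd : (fun x => log (stdNormalCDF x / (stdNormalPDF x / -x)) - log √(2 * π))
      =o[atBot] fun x => -x ^ 2 / 2 :=
    ((hmills.sub_const _).isBigO_one ℝ).trans_isLittleO (isLittleO_one_left_iff ℝ |>.2 hnorm)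
  have hlog : (fun x => log (-x)) =o[atBot] fun x => -x ^ 2 / 2 := by
    refine ((isLittleO_log_rpow_atTop two_pos).comp_tendsto tendsto_neg_atBot_atTop).trans_isBigO
      (IsBigO.of_bound 2 (.of_forall fun x => ?_))
    simp only [Function.comp_apply, rpow_two, neg_sq, norm_div, norm_neg, Real.norm_two,
      Real.norm_of_nonneg (sq_nonneg x)]
    linarith [sq_nonneg x]
  refine IsLittleO.isEquivalent ((hbdd.sub hlog).congr' ?_ .rfl)
  filter_upwards [eventually_lt_atBot 0] with x hx
  rw [log_div (stdNormalCDF_pos x).ne' (div_pos (stdNormalPDF_pos x) (neg_pos.2 hx)).ne',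
    log_div (stdNormalPDF_pos x).ne' (neg_pos.2 hx).ne', log_stdNormalPDF, Pi.sub_apply]
  ring

-- Mills' ratio turns `Φ(b)/Φ(a)` into `(a/b) exp((a² - b²)/2)` up to a factor tending to `1`.
lemma tendsto_stdNormalCDF_div_stdNormalCDF {ι : Type*} {l : Filter ι} {r a b : ι → ℝ} {w κ : ℝ}
    (hw : w < 0) (hr : Tendsto r l atTop) (ha : Tendsto (fun i => a i / r i) l (𝓝 w))
    (hb : Tendsto (fun i => b i / r i) l (𝓝 w))
    (hsq : Tendsto (fun i => a i ^ 2 - b i ^ 2) l (𝓝 κ)) :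
    Tendsto (fun i => stdNormalCDF (b i) / stdNormalCDF (a i)) l (𝓝 (exp (κ / 2))) := by
  have hbot : ∀ x : ι → ℝ, Tendsto (fun i => x i / r i) l (𝓝 w) → Tendsto x l atBot :=
    fun x hx => (hx.neg_mul_atTop hw hr).congr' <| by
      filter_upwards [hr.eventually_gt_atTop 0] with i hi
      field_simp
  have ha' := hbot a ha
  have hb' := hbot b hb
  have hequiv := (isEquivalent_stdNormalCDF_atBot.comp_tendsto hb').div
    (isEquivalent_stdNormalCDF_atBot.comp_tendsto ha')
  refine hequiv.symm.tendsto_nhds ?_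
  have hlim : Tendsto (fun i => a i / r i / (b i / r i) * exp ((a i ^ 2 - b i ^ 2) / 2)) l
      (𝓝 (w / w * exp (κ / 2))) :=
    (ha.div hb hw.ne).mul ((continuous_exp.tendsto _).comp (hsq.div_const 2))
  rw [div_self hw.ne, one_mul] at hlim
  refine hlim.congr' ?_
  filter_upwards [ha'.eventually_lt_atBot 0, hb'.eventually_lt_atBot 0,
    hr.eventually_gt_atTop 0] with i hai hbi hri
  simp only [Function.comp_apply, Pi.div_apply]
  rw [← stdNormalPDF_div_stdNormalPDF]
  field_simp [hai.ne, hbi.ne, (stdNormalPDF_pos (a i)).ne']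

lemma isEquivalent_log_div_add_natCast {α : ℝ} (hα : 0 < α) :
    (fun p : ℕ => log (α / (α + p))) ~[atTop] fun p => -log p := by
  have hlog : Tendsto (fun p : ℕ => log (α * (p / (p + α)))) atTop (𝓝 (log α)) := by
    have := (tendsto_natCast_div_add_atTop α).const_mul α
    rw [mul_one] at this
    exact (continuousAt_log hα.ne').tendsto.comp this
  have hnorm : Tendsto (fun p : ℕ => ‖-log (p : ℝ)‖) atTop atTop :=
    (tendsto_norm_atTop_atTop.comp (tendsto_log_atTop.comp tendsto_natCast_atTop_atTop)).congr
      fun p => (norm_neg _).symm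
  refine IsLittleO.isEquivalent ((((hlog.isBigO_one ℝ).trans_isLittleO
    (isLittleO_one_left_iff ℝ |>.2 hnorm))).congr' ?_ .rfl)
  filter_upwards [eventually_gt_atTop 0] with p hp
  have hp' : (0 : ℝ) < p := Nat.cast_pos.2 hp
  rw [Pi.sub_apply, log_mul hα.ne' (by positivity), log_div hp'.ne' (by positivity),
    log_div hα.ne' (by positivity), add_comm (p : ℝ)]
  ring

lemma tendsto_div_sqrt_log_of_stdNormalCDF_eq {α : ℝ} (hα : 0 < α) {a : ℕ → ℝ}
    (ha : ∀ᶠ p in atTop, stdNormalCDF (a p) = α / (α + p)) :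
    Tendsto (fun p => a p / √(2 * log p)) atTop (𝓝 (-1)) := by
  have hbot : Tendsto a atTop atBot := by
    refine tendsto_atBot_of_tendsto_stdNormalCDF (Tendsto.congr' (ha.mono fun p h => h.symm) ?_)
    exact tendsto_const_nhds.div_atTop
      (tendsto_atTop_add_const_left _ _ tendsto_natCast_atTop_atTop)
  have hequiv : (fun p => a p ^ 2) ~[atTop] fun p => 2 * log p := by
    have h := ((isEquivalent_log_stdNormalCDF_atBot.comp_tendsto hbot).symm.trans
      ((isEquivalent_log_div_add_natCast hα).congr_left (ha.mono fun p h => by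
        simp only [Function.comp_apply, h]))).neg.mul (IsEquivalent.refl (u := fun _ => (2 : ℝ)))
    refine (h.congr_left (.of_forall fun p => ?_)).congr_right (.of_forall fun p => ?_) <;>
      simp only [Function.comp_apply, Pi.mul_apply] <;> ring
  have hne : ∀ᶠ p : ℕ in atTop, 2 * log (p : ℝ) ≠ 0 :=
    ((tendsto_log_atTop.comp tendsto_natCast_atTop_atTop).eventually_gt_atTop 0).mono
      fun p hp => by simp only [Function.comp_apply] at hp; positivity
  have hsqrt := ((isEquivalent_iff_tendsto_one hne).1 hequiv).sqrt.neg
  rw [sqrt_one] at hsqrt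
  refine hsqrt.congr' ?_
  filter_upwards [hbot.eventually_lt_atBot 0] with p hp
  rw [Pi.div_apply, sqrt_div' _ (by positivity), sqrt_sq_eq_abs, abs_of_neg hp, neg_div, neg_neg]

section Scaling

variable {ι : Type*} {l : Filter ι} {L m : ι → ℝ} {w : ℝ}

lemma tendsto_sqrt_add_div_sqrt (hL : Tendsto L l atTop) (s : ℝ) :
    Tendsto (fun i => √(L i + s) / √(L i)) l (𝓝 1) := by
  have h := ((tendsto_const_nhds (x := s)).div_atTop hL).const_add 1 |>.sqrt
  rw [add_zero, sqrt_one] at h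
  refine h.congr' ?_
  filter_upwards [hL.eventually_gt_atTop 0, hL.eventually_gt_atTop (-s)] with i hL0 hLs
  rw [← sqrt_div' _ hL0.le, add_div, div_self hL0.ne']

lemma tendsto_div_of_tendsto_div_sqrt_one_add (hL : Tendsto L l atTop)
    (hm : Tendsto (fun i => m i / √(1 + L i) / √(L i)) l (𝓝 w)) :
    Tendsto (fun i => m i / L i) l (𝓝 w) := by
  have h := hm.mul (tendsto_sqrt_add_div_sqrt hL 1)
  rw [mul_one] at h
  refine h.congr' ?_
  filter_upwards [hL.eventually_gt_atTop 0] with i hL0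
  have h1 : √(1 + L i) ≠ 0 := (sqrt_pos.2 (by linarith)).ne'
  rw [add_comm (L i)]
  field_simp
  rw [sq_sqrt hL0.le]

lemma tendsto_add_div_sqrt_add_div_sqrt (hL : Tendsto L l atTop)
    (hm : Tendsto (fun i => m i / L i) l (𝓝 w)) (c s : ℝ) :
    Tendsto (fun i => (m i + c) / √(L i + s) / √(L i)) l (𝓝 w) := by
  have h := (hm.add ((tendsto_const_nhds (x := c)).div_atTop hL)).div
    (tendsto_sqrt_add_div_sqrt hL s) one_ne_zero
  rw [add_zero, div_one] at h
  refine h.congr' ?_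
  filter_upwards [hL.eventually_gt_atTop 0, hL.eventually_gt_atTop (-s)] with i hL0 hLs
  have h1 : √(L i + s) ≠ 0 := (sqrt_pos.2 (by linarith)).ne'
  have h2 : √(L i) ≠ 0 := (sqrt_pos.2 hL0).ne'
  simp only [Pi.div_apply]
  field_simp
  rw [sq_sqrt hL0.le]
  ring

lemma tendsto_sq_div_sqrt_sub_sq_div_sqrt (hL : Tendsto L l atTop)
    (hm : Tendsto (fun i => m i / L i) l (𝓝 w)) (c s : ℝ) :
    Tendsto (fun i => (m i / √(1 + L i)) ^ 2 - ((m i + c) / √(L i + s)) ^ 2) l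
      (𝓝 (w ^ 2 * (s - 1) - 2 * w * c)) := by
  have hl : Tendsto (fun i => (L i)⁻¹) l (𝓝 0) := tendsto_inv_atTop_zero.comp hL
  have h := ((((hm.pow 2).mul_const (s - 1)).sub
    (((hm.const_mul 2).mul_const c).mul (hl.const_add 1))).sub
      ((hl.mul (hl.const_add 1)).mul_const (c ^ 2))).div
    ((hl.const_add 1).mul ((hl.const_mul s).const_add 1)) (by norm_num)
  simp only [add_zero, mul_zero, zero_mul, sub_zero, mul_one, div_one] at h
  refine h.congr' ?_
  filter_upwards [hL.eventually_gt_atTop 0, hL.eventually_gt_atTop (-s)] with i hL0 hLs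
  simp only [Pi.div_apply, div_pow, sq_sqrt (show 0 ≤ 1 + L i by linarith),
    sq_sqrt (show 0 ≤ L i + s by linarith)]
  have h1 : L i + s ≠ 0 := by linarith
  have h2 : 1 + L i ≠ 0 := by linarith
  field_simp
  ring

end Scaling

lemma tauP_sq (p : ℕ) : tauP p ^ 2 = 2 * log p :=
  sq_sqrt (mul_nonneg zero_le_two (log_natCast_nonneg p))

theorem mvpIBP_cov_expected_features_general (α : ℝ) (hα : 0 < α) (μ : ℕ → ℝ)
    (hμ : ∀ p : ℕ, 2 ≤ p →
      stdNormalCDF (μ p / Real.sqrt (1 + tauP p ^ 2)) = α / (α + p))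
    (c s : ℝ) :
    Filter.Tendsto
      (fun p : ℕ => (p : ℝ) * stdNormalCDF ((μ p + c) / Real.sqrt (2 * Real.log p + s)))
      Filter.atTop (nhds (α * Real.exp (c + (s - 1) / 2))) := by
  set L : ℕ → ℝ := fun p => 2 * log p
  have hL : Tendsto L atTop atTop :=
    (tendsto_log_atTop.comp tendsto_natCast_atTop_atTop).const_mul_atTop two_pos
  have hA : ∀ᶠ p in atTop, stdNormalCDF (μ p / √(1 + L p)) = α / (α + p) :=
    (eventually_ge_atTop 2).mono fun p hp => by rw [← hμ p hp, tauP_sq]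
  have hAL := tendsto_div_sqrt_log_of_stdNormalCDF_eq hα hA
  have hμL := tendsto_div_of_tendsto_div_sqrt_one_add hL hAL
  have hratio := tendsto_stdNormalCDF_div_stdNormalCDF neg_one_lt_zero
    (tendsto_sqrt_atTop.comp hL) hAL (tendsto_add_div_sqrt_add_div_sqrt hL hμL c s)
    (tendsto_sq_div_sqrt_sub_sq_div_sqrt hL hμL c s)
  have hpA : Tendsto (fun p : ℕ => (p : ℝ) * stdNormalCDF (μ p / √(1 + L p))) atTop (𝓝 α) := by
    have h := (tendsto_natCast_div_add_atTop α).const_mul α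
    rw [mul_one] at h
    refine h.congr' (hA.mono fun p hp => ?_)
    dsimp only
    rw [hp, add_comm α]
    ring
  have hexp : ((-1) ^ 2 * (s - 1) - 2 * (-1) * c) / 2 = c + (s - 1) / 2 := by ring
  rw [hexp] at hratio
  refine (hpA.mul hratio).congr' (.of_forall fun p => ?_)
  show _ = (p : ℝ) * stdNormalCDF ((μ p + c) / √(L p + s))
  field_simp [(stdNormalCDF_pos (μ p / √(1 + L p))).ne']

/-- Theorem 6, part i: with covariate effect mean `c = x_i^T γ` and variance
`s = x_i^T Ψ x_i ≥ 0`, the expected number of features per sample in the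
covariate-dependent MVP-IBP model satisfies
`lim_{p→∞} p Φ((μ_p + c)/√(2 log p + s)) = α exp(c + (s-1)/2)`. -/
theorem mvpIBP_cov_expected_features (α : ℝ) (hα : 0 < α) (μ : ℕ → ℝ)
    (hμ : ∀ p : ℕ, 2 ≤ p →
      stdNormalCDF (μ p / Real.sqrt (1 + tauP p ^ 2)) = α / (α + p))
    (c s : ℝ) (hs : 0 ≤ s) :
    Filter.Tendsto
      (fun p : ℕ => (p : ℝ) * stdNormalCDF ((μ p + c) / Real.sqrt (2 * Real.log p + s)))
      Filter.atTop (nhds (α * Real.exp (c + (s - 1) / 2))) :=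
  mvpIBP_cov_expected_features_general α hα μ hμ c s
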